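/- Let Φ : ℝ → ℝ be three times continuously differentiable with convex–concave flux on an interval I: there is r* ∈ I with Φ'''(r) > 0 for all r ∈ I with r < r* and Φ'''(r) < 0 for all r ∈ I with r > r*. Then every off-diagonal conservative shock with data in I is supersonic: if a, b ∈ I, a ≠ b and J(a,b) = 0, then σ(a,b) > Φ''(a) and σ(a,b) > Φ''(b). -/

import Mathlib

/-- Conservative-shock function `J(a,b) = Φ(a) − Φ(b) − ((a−b)/2)·(Φ'(a) + Φ'(b))`. -/
noncomputable def consJ (Φ : ℝ → ℝ) (a b : ℝ) : ℝ :=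
  Φ a - Φ b - ((a - b) / 2) * (deriv Φ a + deriv Φ b)

/-- Rankine–Hugoniot (secant) slope `σ(a,b) = (Φ'(a) − Φ'(b))/(a − b)`. -/
noncomputable def rhSlope (Φ : ℝ → ℝ) (a b : ℝ) : ℝ :=
  (deriv Φ a - deriv Φ b) / (a - b)

/-!
`J(a,b) = 0` says that the trapezoid rule is exact for `Φ'` on `[a,b]`, so `Φ'` meets its chord
at an interior point `c` as well as at `a` and `b`. The mean value theorem on `[a,c]` and `[c,b]`
gives `u < v` with `Φ''(u) = Φ''(v) = σ(a,b)`. Since `Φ''` strictly increases left of `r*` and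
strictly decreases right of it, `u < r* < v`, whence `Φ''(a) < Φ''(u) = σ` and
`Φ''(b) < Φ''(v) = σ`.
-/

open Set

lemma consJ_swap (Φ : ℝ → ℝ) (a b : ℝ) : consJ Φ b a = -consJ Φ a b := by
  unfold consJ
  ring

lemma rhSlope_eq_slope (Φ : ℝ → ℝ) (a b : ℝ) : rhSlope Φ a b = slope (deriv Φ) a b := by
  rw [rhSlope, slope_def_field, ← neg_sub (deriv Φ a), ← neg_sub a, neg_div_neg_eq]

lemma rhSlope_comm (Φ : ℝ → ℝ) (a b : ℝ) : rhSlope Φ b a = rhSlope Φ a b := by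
  rw [rhSlope_eq_slope, rhSlope_eq_slope, slope_comm]

section Trapezoid

variable {F f f' : ℝ → ℝ} {a b : ℝ}

/-- Rolle's theorem for `G`, whose derivative is `f` minus its chord; `G a = G b` is the
exactness of the trapezoid rule. -/
lemma exists_eq_chord_of_trapezoid (hab : a < b) (hF : ∀ x ∈ Icc a b, HasDerivAt F (f x) x)
    (htrap : F a - F b = (a - b) / 2 * (f a + f b)) :
    ∃ c ∈ Ioo a b, f c = f a + slope f a b * (c - a) := by
  set σ := slope f a b
  have hσ : (b - a) * σ = f b - f a := sub_smul_slope f a b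
  let G x := F x - f a * x - σ * (x - a) ^ 2 / 2
  have hG : ∀ x ∈ Icc a b, HasDerivAt G (f x - f a - σ * (x - a)) x := fun x hx ↦ by
    have hsq : HasDerivAt (fun x ↦ (x - a) ^ 2) (2 * (x - a)) x := by
      simpa using ((hasDerivAt_id' x).sub_const a).fun_pow 2
    refine (((hF x hx).fun_sub ((hasDerivAt_id' x).const_mul (f a))).fun_sub
      ((hsq.const_mul σ).div_const 2)).congr_deriv ?_
    ring
  obtain ⟨c, hc, hc0⟩ := exists_hasDerivAt_eq_zero hab
    (fun x hx ↦ (hG x hx).continuousAt.continuousWithinAt)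
    (by simp only [G]; linear_combination htrap - (a - b) / 2 * hσ)
    (fun x hx ↦ hG x (Ioo_subset_Icc_self hx))
  exact ⟨c, hc, by linear_combination hc0⟩

theorem exists_deriv_eq_slope_pair_of_trapezoid (hab : a < b)
    (hF : ∀ x ∈ Icc a b, HasDerivAt F (f x) x) (hf : ∀ x ∈ Icc a b, HasDerivAt f (f' x) x)
    (htrap : F a - F b = (a - b) / 2 * (f a + f b)) :
    ∃ u v, a < u ∧ u < v ∧ v < b ∧ f' u = slope f a b ∧ f' v = slope f a b := by
  obtain ⟨c, ⟨hac, hcb⟩, hc⟩ := exists_eq_chord_of_trapezoid hab hF htrap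
  have hσ : (b - a) * slope f a b = f b - f a := sub_smul_slope f a b
  have hfc : ContinuousOn f (Icc a b) := fun x hx ↦ (hf x hx).continuousAt.continuousWithinAt
  obtain ⟨u, ⟨hau, huc⟩, hu⟩ := exists_hasDerivAt_eq_slope f f' hac
    (hfc.mono (Icc_subset_Icc_right hcb.le)) fun x hx ↦ hf x ⟨hx.1.le, hx.2.le.trans hcb.le⟩
  obtain ⟨v, ⟨hcv, hvb⟩, hv⟩ := exists_hasDerivAt_eq_slope f f' hcb
    (hfc.mono (Icc_subset_Icc_left hac.le)) fun x hx ↦ hf x ⟨hac.le.trans hx.1.le, hx.2.le⟩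
  refine ⟨u, v, hau, huc.trans hcv, hvb, ?_, ?_⟩
  · rw [hu, hc, div_eq_iff (sub_ne_zero.2 hac.ne')]
    ring
  · rw [hv, hc, div_eq_iff (sub_ne_zero.2 hcb.ne')]
    linear_combination -hσ

end Trapezoid

section Unimodal

variable {f : ℝ → ℝ} {I : Set ℝ} {m : ℝ}

lemma strictMonoOn_inter_Iic_of_deriv_pos (hI : I.OrdConnected) (hf : Continuous f)
    (hpos : ∀ x ∈ I, x < m → 0 < deriv f x) : StrictMonoOn f (I ∩ Iic m) :=
  strictMonoOn_of_deriv_pos (hI.convex.inter (convex_Iic m)) hf.continuousOn fun x hx ↦ by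
    rw [interior_inter, interior_Iic] at hx
    exact hpos x (interior_subset hx.1) hx.2

lemma strictAntiOn_inter_Ici_of_deriv_neg (hI : I.OrdConnected) (hf : Continuous f)
    (hneg : ∀ x ∈ I, m < x → deriv f x < 0) : StrictAntiOn f (I ∩ Ici m) :=
  strictAntiOn_of_deriv_neg (hI.convex.inter (convex_Ici m)) hf.continuousOn fun x hx ↦ by
    rw [interior_inter, interior_Ici] at hx
    exact hneg x (interior_subset hx.1) hx.2

lemma lt_of_eq_of_unimodal (hI : I.OrdConnected) (hmono : StrictMonoOn f (I ∩ Iic m))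
    (hanti : StrictAntiOn f (I ∩ Ici m)) {a u v b : ℝ} (ha : a ∈ I) (hb : b ∈ I)
    (hau : a < u) (huv : u < v) (hvb : v < b) (heq : f u = f v) : f a < f u ∧ f b < f v := by
  have hu : u ∈ I := hI.out ha hb ⟨hau.le, (huv.trans hvb).le⟩
  have hv : v ∈ I := hI.out ha hb ⟨(hau.trans huv).le, hvb.le⟩
  have hum : u < m := by
    by_contra! h
    exact (hanti ⟨hu, h⟩ ⟨hv, h.trans huv.le⟩ huv).ne heq.symm
  have hmv : m < v := by
    by_contra! h
    exact (hmono ⟨hu, huv.le.trans h⟩ ⟨hv, h⟩ huv).ne heq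
  exact ⟨hmono ⟨ha, (hau.trans hum).le⟩ ⟨hu, hum.le⟩ hau,
    hanti ⟨hv, hmv.le⟩ ⟨hb, (hmv.trans hvb).le⟩ hvb⟩

end Unimodal

theorem stmt17_general (Φ : ℝ → ℝ) (hΦ : ContDiff ℝ 3 Φ)
    (I : Set ℝ) (hI : I.OrdConnected) (rs : ℝ)
    (h1 : ∀ r ∈ I, r < rs → 0 < iteratedDeriv 3 Φ r)
    (h2 : ∀ r ∈ I, rs < r → iteratedDeriv 3 Φ r < 0)
    (a b : ℝ) (ha : a ∈ I) (hb : b ∈ I) (hab : a ≠ b) (hJ : consJ Φ a b = 0) :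
    iteratedDeriv 2 Φ a < rhSlope Φ a b ∧ iteratedDeriv 2 Φ b < rhSlope Φ a b := by
  wlog hlt : a < b generalizing a b
  · have := this b a hb ha hab.symm (by rw [consJ_swap, hJ, neg_zero])
      (hab.lt_or_gt.resolve_left hlt)
    rw [rhSlope_comm] at this
    exact this.symm
  have hΦ' : Differentiable ℝ (deriv Φ) := by
    simpa only [iteratedDeriv_one] using hΦ.differentiable_iteratedDeriv 1 (by norm_num)
  have hΦ'' : Continuous (iteratedDeriv 2 Φ) :=
    (hΦ.differentiable_iteratedDeriv 2 (by norm_num)).continuous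
  obtain ⟨u, v, hau, huv, hvb, hu, hv⟩ :=
    exists_deriv_eq_slope_pair_of_trapezoid (f' := iteratedDeriv 2 Φ) hlt
      (fun x _ ↦ (hΦ.differentiable (by norm_num) x).hasDerivAt)
      (fun x _ ↦ by rw [iteratedDeriv_succ, iteratedDeriv_one]; exact (hΦ' x).hasDerivAt)
      (sub_eq_zero.mp hJ)
  have hmono := strictMonoOn_inter_Iic_of_deriv_pos hI hΦ'' fun x hx hxr ↦ by
    simpa only [← iteratedDeriv_succ] using h1 x hx hxr
  have hanti := strictAntiOn_inter_Ici_of_deriv_neg hI hΦ'' fun x hx hxr ↦ by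
    simpa only [← iteratedDeriv_succ] using h2 x hx hxr
  obtain ⟨hlt_a, hlt_b⟩ :=
    lt_of_eq_of_unimodal hI hmono hanti ha hb hau huv hvb (hu.trans hv.symm)
  rw [rhSlope_eq_slope]
  exact ⟨hu ▸ hlt_a, hv ▸ hlt_b⟩

theorem stmt17 (Φ : ℝ → ℝ) (hΦ : ContDiff ℝ 3 Φ)
    (I : Set ℝ) (hI : I.OrdConnected) (rs : ℝ) (hrs : rs ∈ I)
    (h1 : ∀ r ∈ I, r < rs → 0 < iteratedDeriv 3 Φ r)
    (h2 : ∀ r ∈ I, rs < r → iteratedDeriv 3 Φ r < 0)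
    (a b : ℝ) (ha : a ∈ I) (hb : b ∈ I) (hab : a ≠ b) (hJ : consJ Φ a b = 0) :
    iteratedDeriv 2 Φ a < rhSlope Φ a b ∧ iteratedDeriv 2 Φ b < rhSlope Φ a b :=
  stmt17_general Φ hΦ I hI rs h1 h2 a b ha hb hab hJ
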